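/- Define, for ν > 1: l₂(ν) = (ν − 1) h₂(ν)/(log(ν)(1 − ν^{−1})) where h₂(ν) = (ν^{−1} − 1 + log ν)/(ν − 1) (equivalently l₂(ν) = (ν log ν − ν + 1)/((ν − 1) log ν)); and for each integer d ≥ 3, l_d(ν) = (ν − 1) h_d(ν)/(log(ν)(1 − ν^{−2/d})) where h_d(ν) = (4/(d²−4)) · ((d−2)ν^{−1} − d ν^{2/d−1} + 2)/(ν^{2/d}(1 − ν^{−1})). Then for every integer d ≥ 2, the function l_d is strictly increasing on (1, ∞). -/

import Mathlib

/-!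
With `r = ν^{1/d}` the ratio of the radii, `l_d(ν)` is a positive multiple of
`g_d(r) = (2 r^d - d r² + d - 2) / ((r² - 1) log r)`. The numerators satisfy
`N_{d+2} - N_d = 2 (r² - 1) (r^d - 1)`, so `g_{d+2} = g_d + 2 (r^d - 1) / log r`, and the added term
is increasing because `(s - 1) / log s` is a secant slope of `exp`. Since `g_2 = 0` and
`g_1(r) = -(r - 1) / ((r + 1) log r)` is increasing, induction in steps of two gives strict
monotonicity for `d ≥ 3`. For `g_1`, and for `l_2(ν) = 1 + 1/(ν - 1) - 1/log ν`, the sign of the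
derivative comes down to `2 log s < s - 1/s`, i.e. `x < sinh x`.
-/

open Real Set

lemma strictMonoOn_Ioi_of_hasDerivAt_pos {a : ℝ} {f f' : ℝ → ℝ}
    (hf : ∀ x ∈ Ioi a, HasDerivAt f (f' x) x) (hf' : ∀ x ∈ Ioi a, 0 < f' x) :
    StrictMonoOn f (Ioi a) :=
  strictMonoOn_of_hasDerivWithinAt_pos (convex_Ioi a)
    (fun x hx => (hf x hx).continuousAt.continuousWithinAt)
    (by simpa only [interior_Ioi] using fun x hx => (hf x hx).hasDerivWithinAt)
    (by rwa [interior_Ioi])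

lemma two_mul_log_lt_sub_inv {s : ℝ} (hs : 1 < s) : 2 * log s < s - s⁻¹ := by
  have h := self_lt_sinh_iff.2 (log_pos hs)
  rw [sinh_eq, exp_neg, exp_log (zero_lt_one.trans hs)] at h
  linarith

lemma mul_log_sq_lt_sub_one_sq {x : ℝ} (hx : 1 < x) : x * log x ^ 2 < (x - 1) ^ 2 := by
  obtain ⟨s, hs, rfl⟩ : ∃ s, 1 < s ∧ x = s ^ 2 :=
    ⟨√x, (lt_sqrt zero_le_one).2 (by simpa using hx), (sq_sqrt (by linarith)).symm⟩
  have := log_pos hs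
  calc s ^ 2 * log (s ^ 2) ^ 2 = s ^ 2 * (2 * log s) ^ 2 := by rw [log_pow]; push_cast; rfl
    _ < s ^ 2 * (s - s⁻¹) ^ 2 := by gcongr; exact two_mul_log_lt_sub_inv hs
    _ = (s ^ 2 - 1) ^ 2 := by field_simp

lemma strictMonoOn_inv_sub_one_sub_inv_log :
    StrictMonoOn (fun x : ℝ => (x - 1)⁻¹ - (log x)⁻¹) (Ioi 1) := by
  refine strictMonoOn_Ioi_of_hasDerivAt_pos (f' := fun x => (x * log x ^ 2)⁻¹ - ((x - 1) ^ 2)⁻¹)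
    (fun x (hx : 1 < x) => ?_) (fun x (hx : 1 < x) => ?_)
  · have hlog := (log_pos hx).ne'
    refine ((((hasDerivAt_id' x).sub_const 1).inv (sub_ne_zero.2 hx.ne')).sub
      ((hasDerivAt_log (by positivity)).inv hlog)).congr_deriv ?_
    field_simp
    ring
  · have := log_pos hx
    exact sub_pos.2 (inv_strictAnti₀ (by positivity) (mul_log_sq_lt_sub_one_sq hx))

lemma strictMonoOn_sub_one_div_log : StrictMonoOn (fun s : ℝ => (s - 1) / log s) (Ioi 1) := by
  intro x (hx : 1 < x) y (hy : 1 < y) hxy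
  have h := strictConvexOn_exp.secant_strict_mono (a := 0) (mem_univ _) (mem_univ (log x))
    (mem_univ (log y)) (log_pos hx).ne' (log_pos hy).ne' (log_lt_log (by linarith) hxy)
  simpa [exp_log (zero_lt_one.trans hx), exp_log (zero_lt_one.trans hy)] using h

lemma strictMonoOn_pow_sub_one_div_log {n : ℕ} (hn : n ≠ 0) :
    StrictMonoOn (fun t : ℝ => (t ^ n - 1) / log t) (Ioi 1) := by
  intro x (hx : 1 < x) y (hy : 1 < y) hxy
  have h := strictMonoOn_sub_one_div_log (one_lt_pow₀ hx hn) (one_lt_pow₀ hy hn)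
    (pow_lt_pow_left₀ hxy (by linarith) hn)
  simp only at h ⊢
  rw [log_pow, log_pow, mul_comm (n : ℝ), mul_comm (n : ℝ), ← div_div, ← div_div] at h
  exact (div_lt_div_iff_of_pos_right (by positivity)).1 h

lemma strictMonoOn_one_sub_div_add_one_mul_log :
    StrictMonoOn (fun t : ℝ => (1 - t) / ((t + 1) * log t)) (Ioi 1) := by
  refine strictMonoOn_Ioi_of_hasDerivAt_pos
    (f' := fun t => (t - t⁻¹ - 2 * log t) / ((t + 1) * log t) ^ 2)
    (fun x (hx : 1 < x) => ?_) (fun x (hx : 1 < x) => ?_)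
  · have := log_pos hx
    have : 0 < x := by linarith
    refine (((hasDerivAt_id' x).const_sub 1).div
      (((hasDerivAt_id' x).add_const 1).mul (hasDerivAt_log (by positivity)))
      (by simp only [Pi.mul_apply]; positivity)).congr_deriv ?_
    simp only [Pi.mul_apply]
    field_simp
    ring
  · have := log_pos hx
    have := two_mul_log_lt_sub_inv hx
    exact div_pos (by linarith) (by positivity)

noncomputable def relVarianceFactorTwo (ν : ℝ) : ℝ :=
  (ν - 1) * ((ν⁻¹ - 1 + log ν) / (ν - 1)) / (log ν * (1 - ν⁻¹))

lemma relVarianceFactorTwo_eq {ν : ℝ} (hν : 1 < ν) :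
    relVarianceFactorTwo ν = 1 + ((ν - 1)⁻¹ - (log ν)⁻¹) := by
  have := log_pos hν
  have : ν - 1 ≠ 0 := sub_ne_zero.2 hν.ne'
  have : 1 - ν⁻¹ ≠ 0 := sub_ne_zero.2 (inv_lt_one_of_one_lt₀ hν).ne'
  unfold relVarianceFactorTwo
  field_simp
  ring

lemma strictMonoOn_relVarianceFactorTwo : StrictMonoOn relVarianceFactorTwo (Ioi 1) :=
  (strictMonoOn_inv_sub_one_sub_inv_log.const_add 1).congr
    fun _ hν => (relVarianceFactorTwo_eq hν).symm

noncomputable def relVarianceFactor (d : ℕ) (ν : ℝ) : ℝ :=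
  (ν - 1) * ((4 / ((d : ℝ) ^ 2 - 4)) * (((d : ℝ) - 2) * ν⁻¹ - (d : ℝ) * ν ^ (2 / (d : ℝ) - 1) + 2)
      / (ν ^ (2 / (d : ℝ)) * (1 - ν⁻¹))) / (log ν * (1 - ν ^ (-(2 / (d : ℝ)))))

/-- `l_d` as a function of the radius ratio `r = ν^{1/d}` of the two balls, without the constant
factor `4 / (d (d² - 4))`. -/
noncomputable def radialFactor (d : ℕ) (r : ℝ) : ℝ :=
  (2 * r ^ d - d * r ^ 2 + d - 2) / ((r ^ 2 - 1) * log r)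

lemma radialFactor_two : radialFactor 2 = 0 := by
  funext r
  simp [radialFactor]

lemma radialFactor_one_eqOn :
    EqOn (radialFactor 1) (fun r => (1 - r) / ((r + 1) * log r)) (Ioi 1) := by
  intro r (hr : 1 < r)
  have := log_pos hr
  have : r - 1 ≠ 0 := sub_ne_zero.2 hr.ne'
  have : r + 1 ≠ 0 := by positivity
  unfold radialFactor
  rw [show r ^ 2 - 1 = (r - 1) * (r + 1) by ring]
  field_simp
  push_cast
  ring

lemma radialFactor_add_two_eqOn (d : ℕ) :
    EqOn (radialFactor (d + 2)) (fun r => radialFactor d r + 2 * ((r ^ d - 1) / log r))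
      (Ioi 1) := by
  intro r (hr : 1 < r)
  have := log_pos hr
  have : r ^ 2 - 1 ≠ 0 := sub_ne_zero.2 (one_lt_pow₀ hr two_ne_zero).ne'
  unfold radialFactor
  field_simp
  push_cast
  ring

lemma strictMonoOn_radialFactor_add_two {d : ℕ} (hd : d ≠ 0)
    (h : MonotoneOn (radialFactor d) (Ioi 1)) : StrictMonoOn (radialFactor (d + 2)) (Ioi 1) := by
  have h₂ : StrictMonoOn (fun r => 2 * ((r ^ d - 1) / log r)) (Ioi 1) := fun _ hx _ hy hxy =>
    mul_lt_mul_of_pos_left (strictMonoOn_pow_sub_one_div_log hd hx hy hxy) two_pos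
  exact (h.add_strictMono h₂).congr (radialFactor_add_two_eqOn d).symm

lemma monotoneOn_radialFactor : ∀ d, d ≠ 0 → MonotoneOn (radialFactor d) (Ioi 1)
  | 1, _ => (strictMonoOn_one_sub_div_add_one_mul_log.congr radialFactor_one_eqOn.symm).monotoneOn
  | 2, _ => radialFactor_two ▸ monotoneOn_const
  | d + 3, _ => (strictMonoOn_radialFactor_add_two d.succ_ne_zero
      (monotoneOn_radialFactor (d + 1) d.succ_ne_zero)).monotoneOn

lemma strictMonoOn_radialFactor {d : ℕ} (hd : 3 ≤ d) : StrictMonoOn (radialFactor d) (Ioi 1) := by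
  obtain ⟨k, rfl⟩ : ∃ k, d = k + 1 + 2 := ⟨d - 3, by omega⟩
  exact strictMonoOn_radialFactor_add_two k.succ_ne_zero
    (monotoneOn_radialFactor (k + 1) k.succ_ne_zero)

lemma relVarianceFactor_pow {d : ℕ} (hd : d ≠ 0) {r : ℝ} (hr : 1 < r) :
    relVarianceFactor d (r ^ d) = 4 / (((d : ℝ) ^ 2 - 4) * d) * radialFactor d r := by
  have hr0 : 0 < r := by linarith
  have hd' : (d : ℝ) ≠ 0 := Nat.cast_ne_zero.2 hd
  have hpow : (r ^ d) ^ (2 / (d : ℝ)) = r ^ 2 := by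
    rw [← rpow_natCast_mul hr0.le, mul_div_cancel₀ _ hd', rpow_two]
  rw [relVarianceFactor, rpow_sub_one (by positivity), rpow_neg (by positivity), hpow, log_pow]
  have := log_pos hr
  have : r ^ d - 1 ≠ 0 := sub_ne_zero.2 (one_lt_pow₀ hr hd).ne'
  have : r ^ 2 - 1 ≠ 0 := sub_ne_zero.2 (one_lt_pow₀ hr two_ne_zero).ne'
  unfold radialFactor
  field_simp
  ring

lemma strictMonoOn_relVarianceFactor {d : ℕ} (hd : 3 ≤ d) :
    StrictMonoOn (relVarianceFactor d) (Ioi 1) := by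
  have hd0 : d ≠ 0 := by omega
  have hroot : ∀ ν : ℝ, 1 < ν → ∃ r > 1, ν = r ^ d := fun ν hν =>
    ⟨ν ^ (d⁻¹ : ℝ), one_lt_rpow hν (by positivity), (rpow_inv_natCast_pow (by linarith) hd0).symm⟩
  have hc : 0 < 4 / (((d : ℝ) ^ 2 - 4) * d) := by
    have : (3 : ℝ) ≤ d := by exact_mod_cast hd
    have : (0 : ℝ) < d ^ 2 - 4 := by nlinarith
    positivity
  intro x hx y hy hxy
  obtain ⟨r, hr, rfl⟩ := hroot x hx
  obtain ⟨s, hs, rfl⟩ := hroot y hy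
  rw [relVarianceFactor_pow hd0 hr, relVarianceFactor_pow hd0 hs]
  exact mul_lt_mul_of_pos_left
    (strictMonoOn_radialFactor hd hr hs (lt_of_pow_lt_pow_left₀ d (by linarith) hxy)) hc

/-- In the Brownian-motion-in-balls model, for every dimension `d ≥ 2`, the relative
variance factor `l_d(ν) = (ν−1) h_d(ν)/(log ν (1−ν^{−2/d}))` is strictly increasing
on `(1, ∞)`. -/
theorem l_d_strictMono :
    StrictMonoOn
      (fun ν : ℝ => (ν - 1) * ((ν⁻¹ - 1 + Real.log ν) / (ν - 1))
        / (Real.log ν * (1 - ν⁻¹)))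
      (Set.Ioi 1) ∧
    ∀ d : ℕ, 3 ≤ d →
      StrictMonoOn
        (fun ν : ℝ => (ν - 1)
          * ((4 / ((d : ℝ) ^ 2 - 4))
              * (((d : ℝ) - 2) * ν⁻¹ - (d : ℝ) * ν ^ (2 / (d : ℝ) - 1) + 2)
              / (ν ^ (2 / (d : ℝ)) * (1 - ν⁻¹)))
          / (Real.log ν * (1 - ν ^ (-(2 / (d : ℝ))))))
        (Set.Ioi 1) :=
  ⟨strictMonoOn_relVarianceFactorTwo, fun _ hd => strictMonoOn_relVarianceFactor hd⟩
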